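/- For all n ≥ 2, the designs X_n generated by the greedy-packing algorithm satisfy SR(X_n) ≥ (1/2)·SR*_n, where SR*_n = max over all n-point designs in X of their separation radius. -/

import Mathlib

/-!
Let `c` be the fill distance of `Xₙ₋₁` in `S`. The greedy rule places each new point at
distance equal to the current fill distance from its predecessors, and fill distances only
decrease along a nested sequence of designs, so all points of `Xₙ` are at least `c` apart:
`c ≤ 2 SR(Xₙ)`. Conversely, `n` points of `S` cannot have pairwise distinct nearest points in
the `n - 1` points of `Xₙ₋₁`, so two of them share one and are within `2c` of each other:
`SR(D') ≤ c`.
-/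

open Metric Set MeasureTheory

/-- Distance from a point `x` to the nearest point of the design `D`. -/
noncomputable def minDist {E : Type*} [NormedAddCommGroup E] (D : Finset E) (x : E) : ℝ :=
  sInf ((fun p => dist x p) '' (D : Set E))

/-- Fill distance (covering radius) of the design `D` for the set `A`:
`CR_A(D) = sup_{x ∈ A} min_{p ∈ D} ‖x - p‖`. -/
noncomputable def fillDist {E : Type*} [NormedAddCommGroup E] (A : Set E) (D : Finset E) : ℝ :=
  sSup ((fun x => minDist D x) '' A)

/-- Separation radius of the design `D`:
`SR(D) = (1/2) min_{p ≠ q ∈ D} ‖p - q‖`. -/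
noncomputable def sepRad {E : Type*} [NormedAddCommGroup E] (D : Finset E) : ℝ :=
  (1 / 2) * sInf ((fun p : E × E => dist p.1 p.2) '' {p | p.1 ∈ D ∧ p.2 ∈ D ∧ p.1 ≠ p.2})

/-- Mesh-ratio of the design `D` for the set `A`: `MR(D) = CR_A(D) / SR(D)`. -/
noncomputable def meshRatio {E : Type*} [NormedAddCommGroup E] (A : Set E) (D : Finset E) : ℝ :=
  fillDist A D / sepRad D

/-- The nested design consisting of the first `n` points of the sequence `x`. -/
noncomputable def design {E : Type*} (x : ℕ → E) (n : ℕ) : Finset E :=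
  letI := Classical.decEq E
  (Finset.range n).image x

section Design

variable {E : Type*}

lemma mem_design {x : ℕ → E} {k : ℕ} {p : E} : p ∈ design x k ↔ ∃ i < k, x i = p := by
  classical
  simp [design]

lemma design_mono (x : ℕ → E) {j k : ℕ} (h : j ≤ k) : design x j ⊆ design x k := fun _ hp =>
  let ⟨i, hi, hxi⟩ := mem_design.1 hp
  mem_design.2 ⟨i, hi.trans_le h, hxi⟩

lemma card_design_le (x : ℕ → E) (k : ℕ) : (design x k).card ≤ k := by
  classical
  exact Finset.card_image_le.trans (Finset.card_range k).le

lemma design_nonempty (x : ℕ → E) {k : ℕ} (hk : 1 ≤ k) : (design x k).Nonempty :=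
  ⟨x 0, mem_design.2 ⟨0, hk, rfl⟩⟩

end Design

section Distances

variable {E : Type*} [NormedAddCommGroup E]

lemma bddBelow_dist_image (D : Finset E) (x : E) :
    BddBelow ((fun p => dist x p) '' (D : Set E)) :=
  ⟨0, by rintro _ ⟨p, -, rfl⟩; exact dist_nonneg⟩

lemma minDist_le {D : Finset E} {p : E} (hp : p ∈ D) (x : E) : minDist D x ≤ dist x p :=
  csInf_le (bddBelow_dist_image D x) ⟨p, hp, rfl⟩

lemma minDist_anti {D D' : Finset E} (h : D ⊆ D') (hD : D.Nonempty) (x : E) :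
    minDist D' x ≤ minDist D x :=
  csInf_le_csInf (bddBelow_dist_image D' x) (hD.elim fun p hp => ⟨dist x p, p, hp, rfl⟩)
    (image_mono (Finset.coe_subset.2 h))

lemma exists_mem_dist_eq_minDist {D : Finset E} (hD : D.Nonempty) (x : E) :
    ∃ p ∈ D, dist x p = minDist D x :=
  ((Finset.coe_nonempty.2 hD).image _).csInf_mem (D.finite_toSet.image _)

lemma minDist_le_fillDist {S : Set E} (hS : Bornology.IsBounded S) {D : Finset E}
    (hD : D.Nonempty) {y : E} (hy : y ∈ S) : minDist D y ≤ fillDist S D := by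
  obtain ⟨p, hp⟩ := hD
  obtain ⟨r, hr⟩ := hS.subset_closedBall p
  have hbdd : BddAbove ((fun x => minDist D x) '' S) := ⟨r, by
    rintro _ ⟨z, hz, rfl⟩
    exact (minDist_le hp z).trans (mem_closedBall.1 (hr hz))⟩
  exact le_csSup hbdd ⟨y, hy, rfl⟩

lemma fillDist_anti {S : Set E} (hS : Bornology.IsBounded S) (hSne : S.Nonempty)
    {D D' : Finset E} (h : D ⊆ D') (hD : D.Nonempty) : fillDist S D' ≤ fillDist S D :=
  csSup_le (hSne.image _) <| by
    rintro _ ⟨y, hy, rfl⟩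
    exact (minDist_anti h hD y).trans (minDist_le_fillDist hS hD hy)

lemma two_mul_sepRad_le_dist {D : Finset E} {p q : E} (hp : p ∈ D) (hq : q ∈ D) (hpq : p ≠ q) :
    2 * sepRad D ≤ dist p q := by
  have : sInf ((fun p : E × E => dist p.1 p.2) '' {p | p.1 ∈ D ∧ p.2 ∈ D ∧ p.1 ≠ p.2}) ≤
      dist p q :=
    csInf_le ⟨0, by rintro _ ⟨r, -, rfl⟩; exact dist_nonneg⟩ ⟨(p, q), ⟨hp, hq, hpq⟩, rfl⟩
  rw [sepRad]
  linarith

lemma le_two_mul_sepRad {D : Finset E} {c : ℝ} {p q : E} (hp : p ∈ D) (hq : q ∈ D)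
    (hpq : p ≠ q) (h : ∀ a ∈ D, ∀ b ∈ D, a ≠ b → c ≤ dist a b) : c ≤ 2 * sepRad D := by
  have : c ≤ sInf ((fun p : E × E => dist p.1 p.2) '' {p | p.1 ∈ D ∧ p.2 ∈ D ∧ p.1 ≠ p.2}) :=
    le_csInf ⟨_, (p, q), ⟨hp, hq, hpq⟩, rfl⟩ <| by
      rintro _ ⟨⟨a, b⟩, ⟨ha, hb, hab⟩, rfl⟩
      exact h a ha b hb hab
  rw [sepRad]
  linarith

lemma exists_ne_dist_le_two_mul_fillDist {S : Set E} (hS : Bornology.IsBounded S)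
    {D D' : Finset E} (hD : D.Nonempty) (hD'S : ↑D' ⊆ S) (hcard : D.card < D'.card) :
    ∃ p ∈ D', ∃ q ∈ D', p ≠ q ∧ dist p q ≤ 2 * fillDist S D := by
  choose nearest hnearest hdist using exists_mem_dist_eq_minDist hD
  obtain ⟨p, hp, q, hq, hpq, hpq_eq⟩ :=
    Finset.exists_ne_map_eq_of_card_lt_of_maps_to hcard fun y _ => hnearest y
  have hclose : ∀ y ∈ D', dist y (nearest y) ≤ fillDist S D := fun y hy =>
    (hdist y).trans_le (minDist_le_fillDist hS hD (hD'S hy))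
  refine ⟨p, hp, q, hq, hpq, ?_⟩
  calc dist p q ≤ dist p (nearest p) + dist q (nearest q) := by
        rw [hpq_eq, dist_comm q]; exact dist_triangle _ _ _
    _ ≤ 2 * fillDist S D := by linarith [hclose p hp, hclose q hq]

end Distances

section Greedy

variable {E : Type*} [NormedAddCommGroup E]

/-- `x k` maximizes the distance to its predecessors over `S` exactly when that distance equals
the fill distance of `S`; the starting point `x 0` is unconstrained. -/
def IsGreedyPacking (S : Set E) (x : ℕ → E) : Prop :=
  ∀ k : ℕ, 1 ≤ k → x k ∈ S ∧ minDist (design x k) (x k) = fillDist S (design x k)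

variable {S : Set E} {x : ℕ → E}

lemma IsGreedyPacking.fillDist_le_dist (hx : IsGreedyPacking S x) (hS : Bornology.IsBounded S)
    {i j m : ℕ} (hij : i < j) (hjm : j ≤ m) : fillDist S (design x m) ≤ dist (x i) (x j) := by
  have hj : 1 ≤ j := by omega
  calc fillDist S (design x m)
      ≤ fillDist S (design x j) :=
        fillDist_anti hS ⟨x j, (hx j hj).1⟩ (design_mono x hjm) (design_nonempty x hj)
    _ = minDist (design x j) (x j) := (hx j hj).2.symm
    _ ≤ dist (x j) (x i) := minDist_le (mem_design.2 ⟨i, hij, rfl⟩) _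
    _ = dist (x i) (x j) := dist_comm _ _

lemma IsGreedyPacking.fillDist_le_dist_of_mem (hx : IsGreedyPacking S x)
    (hS : Bornology.IsBounded S) {m : ℕ} {p q : E} (hp : p ∈ design x (m + 1))
    (hq : q ∈ design x (m + 1)) (hpq : p ≠ q) : fillDist S (design x m) ≤ dist p q := by
  obtain ⟨i, hi, rfl⟩ := mem_design.1 hp
  obtain ⟨j, hj, rfl⟩ := mem_design.1 hq
  rcases lt_or_gt_of_ne fun h : i = j => hpq (congrArg x h) with h | h
  · exact hx.fillDist_le_dist hS h (by omega)
  · rw [dist_comm]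
    exact hx.fillDist_le_dist hS h (by omega)

end Greedy

theorem statement7_general
    {E : Type*} [NormedAddCommGroup E]
    (S : Set E) (hS : IsCompact S)
    (x : ℕ → E)
    (hgreedy : ∀ k : ℕ, 1 ≤ k →
      x k ∈ S ∧ minDist (design x k) (x k) = fillDist S (design x k))
    (n : ℕ) (hn : 2 ≤ n) :
    ∀ D' : Finset E, ↑D' ⊆ S → D'.card = n → (1 / 2) * sepRad D' ≤ sepRad (design x n) := by
  intro D' hD'S hD'card
  obtain ⟨m, rfl⟩ : ∃ m, n = m + 1 := ⟨n - 1, by omega⟩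
  have hx : IsGreedyPacking S x := hgreedy
  have hSb := hS.isBounded
  obtain ⟨p, hp, q, hq, hpq, hpq_le⟩ := exists_ne_dist_le_two_mul_fillDist hSb
    (design_nonempty x (by omega : 1 ≤ m)) hD'S (by have := card_design_le x m; omega)
  have hc : 0 < fillDist S (design x m) := by linarith [dist_pos.2 hpq]
  have hx01 : x 0 ≠ x 1 :=
    dist_pos.1 (hc.trans_le (hx.fillDist_le_dist hSb zero_lt_one (by omega)))
  have hcX : fillDist S (design x m) ≤ 2 * sepRad (design x (m + 1)) :=
    le_two_mul_sepRad (mem_design.2 ⟨0, by omega, rfl⟩) (mem_design.2 ⟨1, by omega, rfl⟩) hx01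
      fun a ha b hb hab => hx.fillDist_le_dist_of_mem hSb ha hb hab
  linarith [two_mul_sepRad_le_dist hp hq hpq]

/-- For all `n ≥ 2`, the designs `Xₙ` generated by the greedy-packing
algorithm satisfy `SR(Xₙ) ≥ (1/2)·SR*ₙ`, where `SR*ₙ` is the maximal separation radius over
all `n`-point designs in `S` (expressed as: `(1/2)·SR(D') ≤ SR(Xₙ)` for every `n`-point
design `D'`). -/
theorem statement7 {d : ℕ} (hd : 1 ≤ d)
    {E : Type*} [NormedAddCommGroup E] [NormedSpace ℝ E] [FiniteDimensional ℝ E]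
    (hdim : Module.finrank ℝ E = d)
    (S : Set E) (hS : IsCompact S)
    (x : ℕ → E) (hinj : Function.Injective x) (hx0 : x 0 ∈ S)
    (hgreedy : ∀ k : ℕ, 1 ≤ k →
      x k ∈ S ∧ minDist (design x k) (x k) = fillDist S (design x k))
    (n : ℕ) (hn : 2 ≤ n) :
    ∀ D' : Finset E, ↑D' ⊆ S → D'.card = n → (1 / 2) * sepRad D' ≤ sepRad (design x n) :=
  statement7_general S hS x hgreedy n hn
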